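/- Let 1/2 < α < 1 and let ψ be a unit vector in the domain of a self-adjoint operator H that is not an eigenvector of H. Then p_{N,α}(τ) = |⟨ψ, exp(-iτN^{α-1}H)ψ⟩|^{2N} converges to 0 as N → ∞, uniformly in τ on compact subsets of ℝ \ {0}. -/

import Mathlib

/-!
Write `f(θ) = ⟨ψ, exp(-iθH)ψ⟩`. Expanding the exponential to second order gives
`f(θ) = 1 - iθ⟨H⟩ - θ²⟨H²⟩/2 + O(θ³)`, hence `|f(θ)|² = 1 - σ²θ² + o(θ²)`, where `σ² > 0` is the
variance of `H` in the state `ψ`. So `|f(θ)|² ≤ exp(-σ²θ²/2)` near `θ = 0`, and with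
`θ = τN^(α-1)` this gives `|f(θ)|^(2N) ≤ exp(-σ²τ²N^(2α-1)/2)`, which tends to `0` uniformly for
`|τ|` bounded away from `0` exactly because `2α - 1 > 0`.
-/

open Filter Asymptotics Topology NormedSpace Complex

theorem isBigO_exp_sub_quadratic (𝕂 : Type*) {𝔸 : Type*} [RCLike 𝕂] [NormedRing 𝔸]
    [NormedAlgebra 𝕂 𝔸] [CompleteSpace 𝔸] :
    (fun x : 𝔸 => exp x - (1 + x + (2⁻¹ : 𝕂) • x ^ 2)) =O[𝓝 0] fun x => ‖x‖ ^ 3 := by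
  simpa [FormalMultilinearSeries.partialSum, Finset.sum_range_succ, expSeries_apply_eq, add_assoc]
    using (exp_hasFPowerSeriesAt_zero (𝕂 := 𝕂) (𝔸 := 𝔸)).isBigO_sub_partialSum_pow 3

theorem isBigO_norm_sq_sub_norm_sq {α F : Type*} [NormedAddCommGroup F] {l : Filter α}
    {f a : α → F} {g : α → ℝ} {c : F} (hfa : (fun x => f x - a x) =O[l] g)
    (hg : Tendsto g l (𝓝 0)) (ha : Tendsto a l (𝓝 c)) :
    (fun x => ‖f x‖ ^ 2 - ‖a x‖ ^ 2) =O[l] g := by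
  have hf : Tendsto f l (𝓝 c) := by simpa using (hfa.trans_tendsto hg).add ha
  have hbdd := (hf.norm.add ha.norm).isBigO_one ℝ
  refine (isBigO_of_le _ fun x => ?_).trans (by simpa using hfa.norm_left.mul hbdd)
  rw [Real.norm_eq_abs, Real.norm_eq_abs, sq_sub_sq, abs_mul, abs_mul, abs_norm,
    abs_of_nonneg (by positivity : 0 ≤ ‖f x‖ + ‖a x‖), mul_comm]
  gcongr
  exact abs_norm_sub_norm_le _ _

theorem tendstoUniformlyOn_pow_comp_mul {g : ℝ → ℝ} {c : ℝ} {u : ℕ → ℝ} {K : Set ℝ}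
    (hg0 : ∀ θ, 0 ≤ g θ) (hc : 0 < c) (hg : ∀ᶠ θ in 𝓝 0, g θ ≤ Real.exp (-(c * θ ^ 2)))
    (hu : Tendsto u atTop (𝓝 0)) (hNu : Tendsto (fun N : ℕ => N * u N ^ 2) atTop atTop)
    (hK : IsCompact K) (hK0 : K ⊆ {0}ᶜ) :
    TendstoUniformlyOn (fun (N : ℕ) (τ : ℝ) => g (τ * u N) ^ N) (fun _ => 0) atTop K := by
  obtain ⟨δ, hδ, hgδ⟩ := Metric.eventually_nhds_iff.mp hg
  obtain ⟨R, hR⟩ := hK.isBounded.exists_norm_le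
  obtain ⟨r, hr, hball⟩ := Metric.isOpen_iff.mp hK.isClosed.isOpen_compl 0 fun h => hK0 h rfl
  have hKr : ∀ τ ∈ K, r ≤ |τ| := fun τ hτ => not_lt.mp fun h => hball (by simpa using h) hτ
  have hsmall : ∀ᶠ N in atTop, |R * u N| < δ := by
    simpa using (hu.const_mul R).eventually (Metric.ball_mem_nhds _ hδ)
  have hdecay : Tendsto (fun N : ℕ => Real.exp (-(c * r ^ 2 * (N * u N ^ 2)))) atTop (𝓝 0) :=
    Real.tendsto_exp_neg_atTop_nhds_zero.comp (hNu.const_mul_atTop (by positivity))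
  rw [Metric.tendstoUniformlyOn_iff]
  intro ε hε
  filter_upwards [hsmall, hdecay.eventually (gt_mem_nhds hε)] with N hNδ hNε τ hτ
  have hθ : |τ * u N| < δ := calc
    |τ * u N| = |τ| * |u N| := abs_mul _ _
    _ ≤ R * |u N| := by gcongr; exact hR τ hτ
    _ ≤ |R * u N| := by rw [abs_mul]; gcongr; exact le_abs_self R
    _ < δ := hNδ
  have hτr : r ^ 2 ≤ τ ^ 2 := by simpa using pow_le_pow_left₀ hr.le (hKr τ hτ) 2
  rw [dist_zero_left, Real.norm_of_nonneg (pow_nonneg (hg0 _) N)]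
  calc g (τ * u N) ^ N ≤ Real.exp (-(c * (τ * u N) ^ 2)) ^ N :=
        pow_le_pow_left₀ (hg0 _) (hgδ (by simpa using hθ)) N
    _ = Real.exp (-(c * τ ^ 2 * (N * u N ^ 2))) := by rw [← Real.exp_nat_mul]; ring_nf
    _ ≤ Real.exp (-(c * r ^ 2 * (N * u N ^ 2))) := by gcongr
    _ < ε := hNε

theorem tendsto_natCast_mul_rpow_sq_atTop {α : ℝ} (hα : 1 / 2 < α) :
    Tendsto (fun N : ℕ => (N : ℝ) * ((N : ℝ) ^ (α - 1)) ^ 2) atTop atTop := by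
  refine ((tendsto_rpow_atTop (by linarith : (0 : ℝ) < 2 * α - 1)).comp
    tendsto_natCast_atTop_atTop).congr' ((eventually_gt_atTop 0).mono fun N hN => ?_)
  have hN : (0 : ℝ) < N := by exact_mod_cast hN
  show (N : ℝ) ^ (2 * α - 1) = N * ((N : ℝ) ^ (α - 1)) ^ 2
  rw [← Real.rpow_natCast, ← Real.rpow_mul hN.le, mul_comm (N : ℝ), ← Real.rpow_add_one hN.ne']
  ring_nf

section

variable {E : Type*} [NormedAddCommGroup E] [InnerProductSpace ℂ E] [CompleteSpace E]

theorem isBigO_inner_exp_smul_sub_quadratic (A : E →L[ℂ] E) (x y : E) :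
    (fun t : ℂ => inner ℂ x (exp (t • A) y)
        - (inner ℂ x y + t * inner ℂ x (A y) + t ^ 2 / 2 * inner ℂ x (A (A y))))
      =O[𝓝 0] fun t => t ^ 3 := by
  set L : (E →L[ℂ] E) →L[ℂ] ℂ := (innerSL ℂ x).comp (ContinuousLinearMap.apply ℂ E y)
  have hA : Tendsto (fun t : ℂ => t • A) (𝓝 0) (𝓝 0) := by
    simpa using (continuous_id.smul continuous_const).tendsto (0 : ℂ) (f := fun t : ℂ => t • A)
  refine (((L.isBigO_comp _ _).trans ((isBigO_exp_sub_quadratic ℂ).comp_tendsto hA)).congr_left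
    fun t => ?_).trans ?_
  · simp only [L, pow_two, Function.comp_apply, Algebra.mul_smul_comm, Algebra.smul_mul_assoc,
      ContinuousLinearMap.comp_apply, ContinuousLinearMap.apply_apply, sub_apply, add_apply,
      one_apply_eq_self, smul_apply, mul_apply_eq_comp, coe_innerSL_apply, inner_sub_right,
      inner_add_right, inner_smul_right, sub_right_inj, add_right_inj]
    ring
  · refine isBigO_of_le' (c := ‖A‖ ^ 3) _ fun t => ?_
    simp [norm_smul, mul_pow, mul_comm]

noncomputable def survivalAmplitude (H : E →L[ℂ] E) (ψ : E) (θ : ℝ) : ℂ :=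
  inner ℂ ψ (exp ((-(θ : ℂ) * I) • H) ψ)

noncomputable def energyVariance (H : E →L[ℂ] E) (ψ : E) : ℝ :=
  ‖H ψ‖ ^ 2 - (inner ℂ ψ (H ψ)).re ^ 2

variable {H : E →L[ℂ] E} {ψ : E}

theorem inner_self_apply_eq_ofReal_re (hH : IsSelfAdjoint H) (ψ : E) :
    inner ℂ ψ (H ψ) = ((inner ℂ ψ (H ψ)).re : ℂ) := by
  simpa using (hH.isSymmetric.coe_re_inner_self_apply ψ).symm

theorem energyVariance_eq_norm_sq (hH : IsSelfAdjoint H) (hψ : ‖ψ‖ = 1) :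
    energyVariance H ψ = ‖H ψ - ((inner ℂ ψ (H ψ)).re : ℂ) • ψ‖ ^ 2 := by
  have hm : inner ℂ (H ψ) ψ = ((inner ℂ ψ (H ψ)).re : ℂ) := by
    rw [hH.isSymmetric.apply_clm]; exact inner_self_apply_eq_ofReal_re hH ψ
  rw [energyVariance, @norm_sub_sq ℂ, inner_smul_right, hm, norm_smul, hψ, ← ofReal_mul]
  simp only [RCLike.re_to_complex, ofReal_re, Complex.norm_real, Real.norm_eq_abs, mul_one, sq_abs]
  ring

theorem energyVariance_pos (hH : IsSelfAdjoint H) (hψ : ‖ψ‖ = 1)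
    (hψH : ¬ ∃ c : ℂ, H ψ = c • ψ) : 0 < energyVariance H ψ := by
  rw [energyVariance_eq_norm_sq hH hψ]
  exact pow_pos (norm_pos_iff.mpr (sub_ne_zero.mpr fun h => hψH ⟨_, h⟩)) 2

theorem isBigO_survivalAmplitude_sub_quadratic (hH : IsSelfAdjoint H) (hψ : ‖ψ‖ = 1) :
    (fun θ : ℝ => survivalAmplitude H ψ θ
        - (1 - θ * (inner ℂ ψ (H ψ)).re * I - θ ^ 2 * ‖H ψ‖ ^ 2 / 2))
      =O[𝓝 0] fun θ => θ ^ 3 := by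
  have hθ : Tendsto (fun θ : ℝ => -(θ : ℂ) * I) (𝓝 0) (𝓝 0) := by
    simpa using (continuous_ofReal.neg.mul continuous_const).tendsto (0 : ℝ)
      (f := fun θ : ℝ => -(θ : ℂ) * I)
  refine (((isBigO_inner_exp_smul_sub_quadratic H ψ ψ).comp_tendsto hθ).congr_left
    fun θ => ?_).trans (isBigO_of_le _ fun θ => by simp)
  have hs : inner ℂ ψ (H (H ψ)) = ((‖H ψ‖ ^ 2 : ℝ) : ℂ) := by
    rw [← hH.isSymmetric.apply_clm]; simp [inner_self_eq_norm_sq_to_K]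
  set m := (inner ℂ ψ (H ψ)).re
  have hm : inner ℂ ψ (H ψ) = m := inner_self_apply_eq_ofReal_re hH ψ
  simp only [Function.comp_apply, survivalAmplitude, inner_self_eq_norm_sq_to_K, hψ, hm, hs]
  push_cast
  linear_combination (-(θ : ℂ) ^ 2 * (‖H ψ‖ : ℂ) ^ 2 / 2) * I_sq

theorem isLittleO_norm_sq_survivalAmplitude (hH : IsSelfAdjoint H) (hψ : ‖ψ‖ = 1) :
    (fun θ : ℝ => ‖survivalAmplitude H ψ θ‖ ^ 2 - (1 - energyVariance H ψ * θ ^ 2))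
      =o[𝓝 0] fun θ => θ ^ 2 := by
  set m := (inner ℂ ψ (H ψ)).re
  set s := ‖H ψ‖ ^ 2
  set a : ℝ → ℂ := fun θ => 1 - θ * m * I - θ ^ 2 * s / 2
  have ha : ∀ θ : ℝ, ‖a θ‖ ^ 2 = 1 - energyVariance H ψ * θ ^ 2 + (s / 2) ^ 2 * θ ^ 4 := by
    intro θ
    have hre_im : a θ = ((1 - θ ^ 2 * s / 2 : ℝ) : ℂ) + ((-(θ * m) : ℝ) : ℂ) * I := by
      push_cast; ring
    rw [hre_im, Complex.sq_norm, normSq_add_mul_I, energyVariance]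
    ring
  have hdiff : (fun θ => ‖survivalAmplitude H ψ θ‖ ^ 2 - ‖a θ‖ ^ 2) =O[𝓝 0] fun θ => θ ^ 3 :=
    isBigO_norm_sq_sub_norm_sq (by simpa [a, s] using isBigO_survivalAmplitude_sub_quadratic hH hψ)
      (by simpa using (continuous_pow 3).tendsto (0 : ℝ)) ((by fun_prop : Continuous a).tendsto 0)
  have hquartic : (fun θ : ℝ => (s / 2) ^ 2 * θ ^ 4) =o[𝓝 0] fun θ => θ ^ 2 :=
    (isLittleO_pow_pow (by norm_num)).const_mul_left _
  refine ((hdiff.trans_isLittleO (isLittleO_pow_pow (by norm_num))).add hquartic).congr_left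
    fun θ => ?_
  rw [ha]
  ring

theorem eventually_norm_sq_survivalAmplitude_le (hH : IsSelfAdjoint H) (hψ : ‖ψ‖ = 1) {c : ℝ}
    (hc : c < energyVariance H ψ) :
    ∀ᶠ θ in 𝓝 0, ‖survivalAmplitude H ψ θ‖ ^ 2 ≤ Real.exp (-(c * θ ^ 2)) := by
  filter_upwards [(isLittleO_norm_sq_survivalAmplitude hH hψ).bound (sub_pos.mpr hc)] with θ hθ
  rw [Real.norm_eq_abs, norm_pow, Real.norm_eq_abs, sq_abs] at hθ
  linarith [le_abs_self (‖survivalAmplitude H ψ θ‖ ^ 2 - (1 - energyVariance H ψ * θ ^ 2)),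
    Real.add_one_le_exp (-(c * θ ^ 2))]

end

/-- For `1/2 < α < 1` and `ψ` not an eigenvector of `H`, the product formula
`p_{N,α}(τ) = |⟨ψ, exp(-iτN^(α-1)H)ψ⟩|^(2N)` converges to `0` uniformly in `τ`
on compact subsets of `ℝ \ {0}`. -/
theorem zeno_supercritical_exponent
    {E : Type*} [NormedAddCommGroup E] [InnerProductSpace ℂ E] [CompleteSpace E]
    (H : E →L[ℂ] E) (hH : IsSelfAdjoint H) (ψ : E) (hψ : ‖ψ‖ = 1)
    (hnoteig : ¬ ∃ c : ℂ, H ψ = c • ψ)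
    (α : ℝ) (hα0 : 1 / 2 < α) (hα : α < 1)
    (K : Set ℝ) (hK : IsCompact K) (hK0 : K ⊆ {0}ᶜ) :
    TendstoUniformlyOn
      (fun (N : ℕ) (τ : ℝ) =>
        ‖(inner ℂ ψ
              ((NormedSpace.exp
                  (((-(τ * (N : ℝ) ^ (α - 1) : ℝ) : ℂ) * Complex.I) • H)) ψ) : ℂ)‖
          ^ (2 * N))
      (fun _ => (0 : ℝ)) atTop K := by
  have hσ := energyVariance_pos hH hψ hnoteig
  have hshrink : Tendsto (fun N : ℕ => (N : ℝ) ^ (α - 1)) atTop (𝓝 0) := by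
    simpa [Function.comp_def] using
      (tendsto_rpow_neg_atTop (by linarith : 0 < 1 - α)).comp tendsto_natCast_atTop_atTop
  have h := tendstoUniformlyOn_pow_comp_mul (fun θ => sq_nonneg ‖survivalAmplitude H ψ θ‖)
    (half_pos hσ) (eventually_norm_sq_survivalAmplitude_le hH hψ (half_lt_self hσ)) hshrink
    (tendsto_natCast_mul_rpow_sq_atTop hα0) hK hK0
  simpa only [survivalAmplitude, ← pow_mul] using h
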